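/- Let β = 1/2, κ̄ > 0 and a > 0. Let K̂ : ℝ → ℂ be measurable with |K̂(ω)| ≤ κ̄ (1 + ω²)^{−1/4} for all ω, and for δ ∈ (0,1/2] let v̂(ω) = a (e^{2πiωδ} − 1)/(2πiω). Then there exists a constant C > 0 (depending only on κ̄) such that for every δ ∈ (0,1/2], ∫_{−∞}^{∞} |v̂(ω)|² |K̂(ω)|² dω ≤ C a² δ² (1 + ln(1/δ)). -/

import Mathlib

open MeasureTheory Real Set Filter

lemma abs_exp_I_sub_one_le (x : ℝ) :
    ‖Complex.exp (x * Complex.I) - 1‖ ≤ |x| := by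
  have h1 : Complex.exp (x * Complex.I) - 1
      = Complex.ofReal (Real.cos x - 1) + Complex.ofReal (Real.sin x) * Complex.I := by
    rw [Complex.exp_mul_I, ← Complex.ofReal_cos, ← Complex.ofReal_sin]
    push_cast; ring
  have h2 : (‖Complex.exp (x * Complex.I) - 1‖) ^ 2 ≤ |x| ^ 2 := by
    rw [h1, Complex.sq_norm, Complex.normSq_add_mul_I, sq_abs]
    nlinarith [Real.sin_sq_add_cos_sq x, Real.one_sub_sq_div_two_le_cos (x := x)]
  calc ‖Complex.exp (x * Complex.I) - 1‖
      = √((‖Complex.exp (x * Complex.I) - 1‖) ^ 2) :=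
        (Real.sqrt_sq (norm_nonneg _)).symm
    _ ≤ √(|x| ^ 2) := Real.sqrt_le_sqrt h2
    _ = |x| := Real.sqrt_sq (abs_nonneg x)

lemma abs_exp_I_sub_one_le_two (x : ℝ) :
    ‖Complex.exp (x * Complex.I) - 1‖ ≤ 2 := by
  calc ‖Complex.exp (x * Complex.I) - 1‖
      ≤ ‖Complex.exp (x * Complex.I)‖ + ‖(1 : ℂ)‖ := by
        exact norm_sub_le (Complex.exp (x * Complex.I)) 1
    _ = 2 := by rw [Complex.norm_exp_ofReal_mul_I, norm_one]; norm_num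

set_option maxHeartbeats 2000000 in
/-- Kullback–Leibler bound in the proof of Theorem 2, singular case `β = 1/2`:
with `v̂(ω) = a (e^{2πiωδ} - 1)/(2πiω)` and `|K̂(ω)| ≤ κ̄ (1+ω²)^{-1/4}`, there is
`C > 0` (depending only on `κ̄`) such that for every `δ ∈ (0,1/2]`,
`∫ |v̂(ω)|² |K̂(ω)|² dω ≤ C a² δ² (1 + ln(1/δ))`. -/
theorem kl_bound_critical (κ' a : ℝ) (hκ : 0 < κ') (ha : 0 < a)
    (Khat : ℝ → ℂ) (hmeas : Measurable Khat)
    (hK : ∀ ω : ℝ, ‖Khat ω‖ ≤ κ' * (1 + ω ^ 2) ^ (-(1 : ℝ)/4)) :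
    ∃ C : ℝ, 0 < C ∧ ∀ δ : ℝ, 0 < δ → δ ≤ 1/2 →
      ∫ ω : ℝ,
          (‖(a : ℂ) * (Complex.exp (2 * Real.pi * Complex.I * ω * δ) - 1) /
            (2 * Real.pi * Complex.I * ω)‖) ^ 2 * (‖Khat ω‖) ^ 2 ≤
        C * a ^ 2 * δ ^ 2 * (1 + Real.log (1 / δ)) := by
  refine ⟨3 * κ' ^ 2, by positivity, fun δ hδ hδ2 => ?_⟩
  set N : ℝ := 1 / δ with hN
  have hNpos : 0 < N := by positivity
  have h1N : (1 : ℝ) ≤ N := by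
    rw [hN]; rw [le_div_iff₀ hδ]; linarith
  -- abs of v-hat
  set A : ℝ → ℝ := fun ω => ‖(a : ℂ) *
      (Complex.exp (2 * Real.pi * Complex.I * ω * δ) - 1) / (2 * Real.pi * Complex.I * ω)‖
    with hAdef
  set B : ℝ → ℝ := fun ω => ‖Khat ω‖ with hBdef
  have hA' : ∀ ω : ℝ, A ω
      = a * ‖Complex.exp (((2 * π * ω * δ : ℝ) : ℂ) * Complex.I) - 1‖
        / (2 * π * |ω|) := by
    intro ω
    have hexp : (2 * (π : ℂ) * Complex.I * ω * δ : ℂ)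
        = ((2 * π * ω * δ : ℝ) : ℂ) * Complex.I := by push_cast; ring
    have hden : (2 * (π : ℂ) * Complex.I * ω : ℂ) = ((2 * π * ω : ℝ) : ℂ) * Complex.I := by
      push_cast; ring
    rw [hAdef]
    simp only
    rw [hexp, hden, norm_div, norm_mul, norm_mul, Complex.norm_real, Real.norm_eq_abs,
      Complex.norm_real, Real.norm_eq_abs, Complex.norm_I, mul_one, abs_of_pos ha]
    congr 1
    rw [abs_mul, abs_mul, abs_of_pos Real.pi_pos]
    norm_num
  have hAnonneg : ∀ ω, 0 ≤ A ω := fun ω => norm_nonneg _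
  have hBnonneg : ∀ ω, 0 ≤ B ω := fun ω => norm_nonneg _
  have hA1 : ∀ ω : ℝ, A ω ≤ a * δ := by
    intro ω
    rcases eq_or_ne ω 0 with rfl | hω
    · rw [hA']; simp; positivity
    · have hωpos : 0 < |ω| := abs_pos.2 hω
      rw [hA', div_le_iff₀ (by positivity)]
      have h := abs_exp_I_sub_one_le (2 * π * ω * δ)
      have habs : |2 * π * ω * δ| = 2 * π * |ω| * δ := by
        rw [abs_mul, abs_mul, abs_mul, abs_of_pos hδ, abs_of_pos Real.pi_pos]
        norm_num
      calc a * ‖Complex.exp (((2 * π * ω * δ : ℝ) : ℂ) * Complex.I) - 1‖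
          ≤ a * (2 * π * |ω| * δ) := by
            apply mul_le_mul_of_nonneg_left _ ha.le
            rw [← habs]; exact h
        _ = a * δ * (2 * π * |ω|) := by ring
  have hA2 : ∀ ω : ℝ, ω ≠ 0 → A ω ≤ a / (π * |ω|) := by
    intro ω hω
    have hωpos : 0 < |ω| := abs_pos.2 hω
    rw [hA', div_le_div_iff₀ (by positivity) (by positivity)]
    have h := abs_exp_I_sub_one_le_two (2 * π * ω * δ)
    calc a * ‖Complex.exp (((2 * π * ω * δ : ℝ) : ℂ) * Complex.I) - 1‖ * (π * |ω|)
        ≤ a * 2 * (π * |ω|) := by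
          apply mul_le_mul_of_nonneg_right _ (by positivity)
          exact mul_le_mul_of_nonneg_left h ha.le
      _ = a * (2 * π * |ω|) := by ring
  -- bounds on B^2
  have hB0 : ∀ ω : ℝ, B ω ^ 2 ≤ κ' ^ 2 * (1 + ω ^ 2) ^ (-(1 : ℝ)/2) := by
    intro ω
    have h1 : (0:ℝ) < 1 + ω ^ 2 := by positivity
    have h := pow_le_pow_left₀ (hBnonneg ω) (hK ω) 2
    calc B ω ^ 2 ≤ (κ' * (1 + ω ^ 2) ^ (-(1 : ℝ)/4)) ^ 2 := h
      _ = κ' ^ 2 * ((1 + ω ^ 2) ^ (-(1 : ℝ)/4)) ^ 2 := by ring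
      _ = κ' ^ 2 * (1 + ω ^ 2) ^ (-(1 : ℝ)/2) := by
          rw [← Real.rpow_natCast ((1 + ω ^ 2) ^ (-(1 : ℝ)/4)) 2, ← Real.rpow_mul h1.le]
          norm_num
  have hB1 : ∀ ω : ℝ, B ω ^ 2 ≤ κ' ^ 2 := by
    intro ω
    refine (hB0 ω).trans ?_
    have : (1 + ω ^ 2) ^ (-(1 : ℝ)/2) ≤ 1 :=
      Real.rpow_le_one_of_one_le_of_nonpos (by nlinarith [sq_nonneg ω]) (by norm_num)
    nlinarith [sq_nonneg κ']
  have hB2 : ∀ ω : ℝ, ω ≠ 0 → B ω ^ 2 ≤ κ' ^ 2 * |ω|⁻¹ := by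
    intro ω hω
    have hωpos : 0 < |ω| := abs_pos.2 hω
    refine (hB0 ω).trans ?_
    have key : (1 + ω ^ 2) ^ (-(1 : ℝ)/2) ≤ |ω|⁻¹ := by
      have h1 : (0:ℝ) < 1 + ω ^ 2 := by positivity
      have h2 : (ω ^ 2 : ℝ) ^ ((1 : ℝ)/2) ≤ (1 + ω ^ 2) ^ ((1 : ℝ)/2) :=
        Real.rpow_le_rpow (by positivity) (by linarith) (by norm_num)
      have h3 : (ω ^ 2 : ℝ) ^ ((1 : ℝ)/2) = |ω| := by
        rw [← sq_abs, ← Real.rpow_natCast |ω| 2, ← Real.rpow_mul (abs_nonneg ω)]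
        norm_num
      have h4 : (0:ℝ) < (ω ^ 2 : ℝ) ^ ((1 : ℝ)/2) := by rw [h3]; exact hωpos
      rw [show (-(1:ℝ)/2) = -((1:ℝ)/2) by norm_num, Real.rpow_neg h1.le]
      rw [← h3]
      exact inv_anti₀ h4 h2
    exact mul_le_mul_of_nonneg_left key (by positivity)
  -- the dominating function
  set g1 : ℝ → ℝ := (Icc (-1:ℝ) 1).indicator (fun _ => δ ^ 2) with hg1
  set g2 : ℝ → ℝ := (Icc (1:ℝ) N).indicator (fun x => δ ^ 2 / x) with hg2
  set g3 : ℝ → ℝ := (Icc (-N) (-1:ℝ)).indicator (fun x => δ ^ 2 / (-x)) with hg3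
  set g4 : ℝ → ℝ := (Ioi N).indicator (fun x => δ / (π ^ 2 * x ^ 2)) with hg4
  set g5 : ℝ → ℝ := (Iio (-N)).indicator (fun x => δ / (π ^ 2 * x ^ 2)) with hg5
  set G : ℝ → ℝ := fun ω => a ^ 2 * κ' ^ 2 * (g1 ω + g2 ω + g3 ω + g4 ω + g5 ω) with hG
  have hg1nn : ∀ x, 0 ≤ g1 x := fun x => Set.indicator_nonneg (fun y _ => by positivity) x
  have hg2nn : ∀ x, 0 ≤ g2 x := fun x => Set.indicator_nonneg
    (fun y hy => div_nonneg (by positivity) (by linarith [hy.1])) x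
  have hg3nn : ∀ x, 0 ≤ g3 x := fun x => Set.indicator_nonneg
    (fun y hy => div_nonneg (by positivity) (by linarith [hy.2])) x
  have hg4nn : ∀ x, 0 ≤ g4 x := fun x => Set.indicator_nonneg
    (fun y _ => div_nonneg hδ.le (by positivity)) x
  have hg5nn : ∀ x, 0 ≤ g5 x := fun x => Set.indicator_nonneg
    (fun y _ => div_nonneg hδ.le (by positivity)) x
  -- pointwise domination
  have hfG : ∀ ω : ℝ, A ω ^ 2 * B ω ^ 2 ≤ G ω := by
    intro ω
    have haknn : (0:ℝ) ≤ a ^ 2 * κ' ^ 2 := by positivity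
    rcases le_or_gt |ω| 1 with h1 | h1
    · have hmem : ω ∈ Icc (-1:ℝ) 1 := abs_le.mp h1
      have e1 : g1 ω = δ ^ 2 := Set.indicator_of_mem hmem _
      have hf : A ω ^ 2 * B ω ^ 2 ≤ (a * δ) ^ 2 * κ' ^ 2 :=
        mul_le_mul (pow_le_pow_left₀ (hAnonneg ω) (hA1 ω) 2) (hB1 ω) (sq_nonneg _)
          (by positivity)
      rw [hG]
      simp only
      nlinarith [hg2nn ω, hg3nn ω, hg4nn ω, hg5nn ω]
    · have hω0 : ω ≠ 0 := by
        intro h; rw [h] at h1; simp at h1; linarith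
      have hωpos : 0 < |ω| := abs_pos.2 hω0
      rcases le_or_gt |ω| N with h2 | h2
      · -- middle region
        have hf : A ω ^ 2 * B ω ^ 2 ≤ (a * δ) ^ 2 * (κ' ^ 2 * |ω|⁻¹) :=
          mul_le_mul (pow_le_pow_left₀ (hAnonneg ω) (hA1 ω) 2) (hB2 ω hω0) (sq_nonneg _)
            (by positivity)
        have hval : g2 ω + g3 ω = δ ^ 2 / |ω| := by
          rcases le_or_gt 0 ω with hs | hs
          · have hωeq : |ω| = ω := abs_of_nonneg hs
            have hmem : ω ∈ Icc (1:ℝ) N := ⟨by rw [← hωeq]; exact h1.le, by rw [← hωeq]; exact h2⟩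
            have hnot : ω ∉ Icc (-N) (-1:ℝ) := by
              intro hmem'; have := hmem'.2; linarith
            rw [hg2, hg3]
            rw [Set.indicator_of_mem hmem, Set.indicator_of_notMem hnot, hωeq]
            ring
          · have hωeq : |ω| = -ω := abs_of_neg hs
            have hmem : ω ∈ Icc (-N) (-1:ℝ) := by
              constructor
              · have : -ω ≤ N := by rw [← hωeq]; exact h2
                linarith
              · have : 1 ≤ -ω := by rw [← hωeq]; exact h1.le
                linarith
            have hnot : ω ∉ Icc (1:ℝ) N := by intro hmem'; have := hmem'.1; linarith
            rw [hg2, hg3]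
            rw [Set.indicator_of_mem hmem, Set.indicator_of_notMem hnot, hωeq]
            ring
        rw [hG]
        simp only
        have : (a * δ) ^ 2 * (κ' ^ 2 * |ω|⁻¹) = a ^ 2 * κ' ^ 2 * (δ ^ 2 / |ω|) := by
          rw [div_eq_mul_inv]; ring
        rw [this] at hf
        refine hf.trans ?_
        have hrest : δ ^ 2 / |ω| ≤ g1 ω + g2 ω + g3 ω + g4 ω + g5 ω := by
          rw [show g1 ω + g2 ω + g3 ω + g4 ω + g5 ω
            = (g2 ω + g3 ω) + (g1 ω + g4 ω + g5 ω) by ring, hval]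
          nlinarith [hg1nn ω, hg4nn ω, hg5nn ω]
        exact mul_le_mul_of_nonneg_left hrest haknn
      · -- tail region
        have hNω : N < |ω| := h2
        have hinv : |ω|⁻¹ ≤ δ := by
          have h' : 1 / δ ≤ |ω| := by rw [← hN]; exact hNω.le
          rw [div_le_iff₀ hδ] at h'
          rw [inv_eq_one_div, div_le_iff₀ hωpos]
          linarith
        have hf1 : A ω ^ 2 ≤ a ^ 2 / (π ^ 2 * ω ^ 2) := by
          have := pow_le_pow_left₀ (hAnonneg ω) (hA2 ω hω0) 2
          calc A ω ^ 2 ≤ (a / (π * |ω|)) ^ 2 := this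
            _ = a ^ 2 / (π ^ 2 * ω ^ 2) := by
              rw [div_pow, mul_pow, sq_abs]
        have hf2 : B ω ^ 2 ≤ κ' ^ 2 * δ := by
          refine (hB2 ω hω0).trans ?_
          exact mul_le_mul_of_nonneg_left hinv (by positivity)
        have hf : A ω ^ 2 * B ω ^ 2 ≤ (a ^ 2 / (π ^ 2 * ω ^ 2)) * (κ' ^ 2 * δ) :=
          mul_le_mul hf1 hf2 (sq_nonneg _) (by positivity)
        have heq : (a ^ 2 / (π ^ 2 * ω ^ 2)) * (κ' ^ 2 * δ)
            = a ^ 2 * κ' ^ 2 * (δ / (π ^ 2 * ω ^ 2)) := by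
          field_simp
        have hval : g4 ω + g5 ω = δ / (π ^ 2 * ω ^ 2) := by
          rcases le_or_gt 0 ω with hs | hs
          · have hωeq : |ω| = ω := abs_of_nonneg hs
            have hmem : ω ∈ Ioi N := by rw [mem_Ioi, ← hωeq]; exact h2
            have hnot : ω ∉ Iio (-N) := by
              rw [mem_Iio]; push_neg; linarith
            rw [hg4, hg5, Set.indicator_of_mem hmem, Set.indicator_of_notMem hnot]
            ring
          · have hωeq : |ω| = -ω := abs_of_neg hs
            have hmem : ω ∈ Iio (-N) := by
              rw [mem_Iio]
              have : N < -ω := by rw [← hωeq]; exact h2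
              linarith
            have hnot : ω ∉ Ioi N := by rw [mem_Ioi]; push_neg; linarith
            rw [hg4, hg5, Set.indicator_of_mem hmem, Set.indicator_of_notMem hnot]
            ring
        rw [hG]
        simp only
        rw [heq] at hf
        refine hf.trans ?_
        have hrest : δ / (π ^ 2 * ω ^ 2) ≤ g1 ω + g2 ω + g3 ω + g4 ω + g5 ω := by
          rw [show g1 ω + g2 ω + g3 ω + g4 ω + g5 ω
            = (g4 ω + g5 ω) + (g1 ω + g2 ω + g3 ω) by ring, hval]
          nlinarith [hg1nn ω, hg2nn ω, hg3nn ω]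
        exact mul_le_mul_of_nonneg_left hrest haknn
  -- integrability
  have i1 : Integrable g1 := by
    refine (integrableOn_const ?_).integrable_indicator measurableSet_Icc
    rw [Real.volume_Icc]
    exact ENNReal.ofReal_ne_top
  have i2 : Integrable g2 := by
    have hc : ContinuousOn (fun x : ℝ => δ ^ 2 / x) (Icc (1:ℝ) N) := by
      intro x hx
      refine ContinuousAt.continuousWithinAt ?_
      refine continuousAt_const.div continuous_id.continuousAt ?_
      intro h
      rw [h] at hx
      linarith [hx.1]
    exact (hc.integrableOn_Icc).integrable_indicator measurableSet_Icc
  have i3 : Integrable g3 := by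
    have hc : ContinuousOn (fun x : ℝ => δ ^ 2 / (-x)) (Icc (-N) (-1:ℝ)) := by
      intro x hx
      refine ContinuousAt.continuousWithinAt ?_
      refine continuousAt_const.div continuous_neg.continuousAt ?_
      intro h
      have hx0 : x = 0 := by linarith [neg_eq_zero.mp h]
      rw [hx0] at hx
      linarith [hx.2]
    exact (hc.integrableOn_Icc).integrable_indicator measurableSet_Icc
  have hIoi : IntegrableOn (fun x : ℝ => δ / (π ^ 2 * x ^ 2)) (Ioi N) := by
    have h := (integrableOn_Ioi_rpow_of_lt (by norm_num : (-2:ℝ) < -1) hNpos).const_mul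
      (δ / π ^ 2)
    refine MeasureTheory.IntegrableOn.congr_fun h (fun x hx => ?_) measurableSet_Ioi
    have hx0 : (0:ℝ) < x := lt_trans hNpos hx
    show δ / π ^ 2 * x ^ (-2:ℝ) = δ / (π ^ 2 * x ^ 2)
    have hrw : x ^ (-2:ℝ) = (x ^ 2)⁻¹ := by
      rw [show (-2:ℝ) = -(2:ℝ) by norm_num, Real.rpow_neg hx0.le,
        show (2:ℝ) = ((2:ℕ):ℝ) by norm_num, Real.rpow_natCast]
    rw [hrw]
    field_simp
  have i4 : Integrable g4 := hIoi.integrable_indicator measurableSet_Ioi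
  have i5 : Integrable g5 := by
    have h := (hIoi.integrable_indicator measurableSet_Ioi).comp_mul_left'
      (R := (-1:ℝ)) (by norm_num)
    have he : g5 = fun x => (Ioi N).indicator (fun y : ℝ => δ / (π ^ 2 * y ^ 2)) (-1 * x) := by
      funext x
      rw [hg5]
      by_cases hx : x ∈ Iio (-N)
      · rw [Set.indicator_of_mem hx, Set.indicator_of_mem
          (by rw [mem_Ioi]; rw [mem_Iio] at hx; nlinarith : (-1 * x) ∈ Ioi N)]
        rw [show ((-1:ℝ) * x) ^ 2 = x ^ 2 by ring]
      · rw [Set.indicator_of_notMem hx, Set.indicator_of_notMem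
          (by rw [mem_Ioi]; rw [mem_Iio] at hx; push_neg at hx ⊢; nlinarith)]
    rw [he]
    exact h
  have i12 : Integrable (fun ω => g1 ω + g2 ω) := i1.add i2
  have i123 : Integrable (fun ω => g1 ω + g2 ω + g3 ω) := i12.add i3
  have i1234 : Integrable (fun ω => g1 ω + g2 ω + g3 ω + g4 ω) := i123.add i4
  have isum : Integrable (fun ω => g1 ω + g2 ω + g3 ω + g4 ω + g5 ω) := i1234.add i5
  have hGint : Integrable G := by
    rw [hG]
    exact isum.const_mul _
  -- integral values
  have hlog : ∫ x in (1:ℝ)..N, δ ^ 2 / x = δ ^ 2 * Real.log N := by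
    simp_rw [div_eq_mul_inv]
    rw [intervalIntegral.integral_const_mul, integral_inv
      (by rw [Set.uIcc_of_le h1N]; rintro ⟨h0, -⟩; linarith)]
    rw [div_one]
  have v1 : ∫ ω, g1 ω = 2 * δ ^ 2 := by
    rw [hg1, integral_indicator measurableSet_Icc, setIntegral_const, measureReal_def, Real.volume_Icc]
    rw [ENNReal.toReal_ofReal (by norm_num : (0:ℝ) ≤ 1 - (-1))]
    norm_num
  have v2 : ∫ ω, g2 ω = δ ^ 2 * Real.log N := by
    rw [hg2, integral_indicator measurableSet_Icc, integral_Icc_eq_integral_Ioc,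
      ← intervalIntegral.integral_of_le h1N]
    exact hlog
  have v3 : ∫ ω, g3 ω = δ ^ 2 * Real.log N := by
    rw [hg3, integral_indicator measurableSet_Icc, integral_Icc_eq_integral_Ioc,
      ← intervalIntegral.integral_of_le (by linarith : (-N:ℝ) ≤ -1)]
    have h := intervalIntegral.integral_comp_neg (a := (-N:ℝ)) (b := (-1:ℝ))
      (f := fun x : ℝ => δ ^ 2 / x)
    simp only [neg_neg] at h
    rw [h]
    exact hlog
  have v4' : ∫ x in Ioi N, δ / (π ^ 2 * x ^ 2) = δ ^ 2 / π ^ 2 := by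
    have hcong : ∫ x in Ioi N, δ / (π ^ 2 * x ^ 2)
        = ∫ x in Ioi N, (δ / π ^ 2) * x ^ (-2:ℝ) := by
      apply setIntegral_congr_fun measurableSet_Ioi
      intro x hx
      have hx0 : (0:ℝ) < x := lt_trans hNpos hx
      show δ / (π ^ 2 * x ^ 2) = δ / π ^ 2 * x ^ (-2:ℝ)
      have hrw : x ^ (-2:ℝ) = (x ^ 2)⁻¹ := by
        rw [show (-2:ℝ) = -(2:ℝ) by norm_num, Real.rpow_neg hx0.le,
          show (2:ℝ) = ((2:ℕ):ℝ) by norm_num, Real.rpow_natCast]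
      rw [hrw]
      field_simp
    rw [hcong, MeasureTheory.integral_const_mul,
      integral_Ioi_rpow_of_lt (by norm_num) hNpos]
    rw [show ((-2:ℝ)+1) = -1 by norm_num, Real.rpow_neg_one, hN]
    rw [one_div, inv_inv]
    field_simp
  have v4 : ∫ ω, g4 ω = δ ^ 2 / π ^ 2 := by
    rw [hg4, integral_indicator measurableSet_Ioi]
    exact v4'
  have v5 : ∫ ω, g5 ω = δ ^ 2 / π ^ 2 := by
    rw [hg5, integral_indicator measurableSet_Iio, ← integral_Iic_eq_integral_Iio]
    have h := integral_comp_neg_Ioi N (fun x : ℝ => δ / (π ^ 2 * x ^ 2))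
    simp only [neg_sq] at h
    rw [← h]
    exact v4'
  have hGval : ∫ ω, G ω = a ^ 2 * κ' ^ 2 * (2 * δ ^ 2 + δ ^ 2 * Real.log N
      + δ ^ 2 * Real.log N + δ ^ 2 / π ^ 2 + δ ^ 2 / π ^ 2) := by
    rw [hG, MeasureTheory.integral_const_mul, integral_add i1234 i5, integral_add i123 i4,
      integral_add i12 i3, integral_add i1 i2, v1, v2, v3, v4, v5]
  -- conclusion
  have hmono : ∫ ω : ℝ, A ω ^ 2 * B ω ^ 2 ≤ ∫ ω, G ω :=
    integral_mono_of_nonneg (ae_of_all _ (fun ω => by positivity)) hGint (ae_of_all _ hfG)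
  have hL : 0 ≤ Real.log N := Real.log_nonneg h1N
  have hπ : 2 / π ^ 2 ≤ 1 := by
    rw [div_le_one (by positivity)]
    nlinarith [Real.pi_gt_three]
  have hd : δ ^ 2 / π ^ 2 + δ ^ 2 / π ^ 2 ≤ δ ^ 2 := by
    have h2 : δ ^ 2 / π ^ 2 + δ ^ 2 / π ^ 2 = δ ^ 2 * (2 / π ^ 2) := by ring
    rw [h2]
    calc δ ^ 2 * (2 / π ^ 2) ≤ δ ^ 2 * 1 := mul_le_mul_of_nonneg_left hπ (sq_nonneg δ)
      _ = δ ^ 2 := mul_one _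
  have hsum : 2 * δ ^ 2 + δ ^ 2 * Real.log N + δ ^ 2 * Real.log N + δ ^ 2 / π ^ 2
      + δ ^ 2 / π ^ 2 ≤ 3 * δ ^ 2 * (1 + Real.log N) := by
    nlinarith [mul_nonneg (sq_nonneg δ) hL]
  calc ∫ ω : ℝ, A ω ^ 2 * B ω ^ 2 ≤ ∫ ω, G ω := hmono
    _ = a ^ 2 * κ' ^ 2 * (2 * δ ^ 2 + δ ^ 2 * Real.log N + δ ^ 2 * Real.log N
        + δ ^ 2 / π ^ 2 + δ ^ 2 / π ^ 2) := hGval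
    _ ≤ a ^ 2 * κ' ^ 2 * (3 * δ ^ 2 * (1 + Real.log N)) :=
        mul_le_mul_of_nonneg_left hsum (by positivity)
    _ = 3 * κ' ^ 2 * a ^ 2 * δ ^ 2 * (1 + Real.log N) := by ring
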